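/- For the k-Toffoli correctness proof (Theorem 2 structure): with the three control conditions C₁ = [x_k = 0], C₂ = [x_k=0 ∧ i*≠⊥ ∧ x_{i*} odd] ∨ [x_k=1 ∧ (i*=⊥ ∨ x_{i*} even)], C₃ = [x_k=0 ∧ i*≠⊥ ∧ x_{i*} even] ∨ [x_k=1 ∧ (i*=⊥ ∨ x_{i*} even)], an odd number of C₁, C₂, C₃ hold if and only if x₁ = ⋯ = x_k = 0. -/

import Mathlib

/-!
If `x_k = 0`, then `C₁` holds and `C₂`, `C₃` say that `i*` exists with `x_{i*}` odd, resp. even;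
as `i*` is unique, exactly one of them holds when `i*` exists and neither when `i* = ⊥`, i.e. when
`x = 0^k`. If `x_k ≠ 0`, then `C₁` fails and `C₂`, `C₃` both reduce to `x_k = 1 ∧ ¬ A`.
-/
section
variable {ι : Type*} [LinearOrder ι]

theorem isGreatest_setOf_iff {p : ι → Prop} {i : ι} :
    IsGreatest {j | p j} i ↔ p i ∧ ∀ j, i < j → ¬ p j := by
  simp only [IsGreatest, upperBounds, Set.mem_ofPred_eq, ← not_lt]
  exact and_congr_right fun _ => forall_congr' fun _ => imp_not_comm

theorem exists_isGreatest_iff_nonempty [Finite ι] {S : Set ι} :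
    (∃ i, IsGreatest S i) ↔ S.Nonempty := by
  refine ⟨fun ⟨i, hi⟩ => ⟨i, hi.1⟩, fun hS => ?_⟩
  obtain ⟨i, hiS, hi⟩ := S.exists_max_image id S.toFinite hS
  exact ⟨i, hiS, hi⟩

theorem exists_isGreatest_and_iff_and_not_iff (S : Set ι) (q : ι → Prop) :
    ((∃ i, IsGreatest S i ∧ q i) ↔ ∃ i, IsGreatest S i ∧ ¬ q i) ↔ ¬ ∃ i, IsGreatest S i := by
  constructor
  · rintro h ⟨i, hi⟩
    by_cases hq : q i
    · obtain ⟨j, hj, hqj⟩ := h.1 ⟨i, hi, hq⟩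
      exact hqj (hj.unique hi ▸ hq)
    · obtain ⟨j, hj, hqj⟩ := h.2 ⟨i, hi, hq⟩
      exact hq (hj.unique hi ▸ hqj)
  · intro h
    exact iff_of_false (fun ⟨i, hi, _⟩ => h ⟨i, hi⟩) (fun ⟨i, hi, _⟩ => h ⟨i, hi⟩)
end

/-- The case analysis of Theorem 2: with `i*` the largest index `i < k-1` (0-based:
`i < k-1`) with `x_i ≠ 0`, and conditions
`C₁ = [x_k = 0]`,
`C₂ = [x_k = 0 ∧ i* ≠ ⊥ ∧ x_{i*} odd] ∨ [x_k = 1 ∧ (i* = ⊥ ∨ x_{i*} even)]`,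
`C₃ = [x_k = 0 ∧ i* ≠ ⊥ ∧ x_{i*} even] ∨ [x_k = 1 ∧ (i* = ⊥ ∨ x_{i*} even)]`,
an odd number of `C₁, C₂, C₃` hold iff `x = 0^k`. -/
theorem stmt_15 (d k : ℕ) (hd : 3 ≤ d) (hk : 2 ≤ k) (x : Fin k → Fin d) :
    let z : Fin d := ⟨0, by omega⟩
    let o : Fin d := ⟨1, by omega⟩
    let last : Fin k := ⟨k - 1, by omega⟩
    -- `LN i` : `i` is the last nonzero index among `x₁, …, x_{k-1}` (i.e. `i = i*`)
    let LN : Fin k → Prop := fun i =>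
      (i : ℕ) < k - 1 ∧ x i ≠ z ∧ ∀ j : Fin k, (i : ℕ) < (j : ℕ) → (j : ℕ) < k - 1 → x j = z
    -- `A` : `i* ≠ ⊥` and `x_{i*}` is odd
    let A : Prop := ∃ i, LN i ∧ ((x i : ℕ)) % 2 = 1
    let C₁ : Prop := x last = z
    let C₂ : Prop := (x last = z ∧ A) ∨ (x last = o ∧ ¬ A)
    let C₃ : Prop := (x last = z ∧ ∃ i, LN i ∧ ((x i : ℕ)) % 2 = 0) ∨ (x last = o ∧ ¬ A)
    (Xor' (Xor' C₁ C₂) C₃ ↔ ∀ i, x i = z) := by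
  intro z o last LN A C₁ C₂ C₃
  change Xor (Xor C₁ C₂) C₃ ↔ _
  set S : Set (Fin k) := {j | (j : ℕ) < k - 1 ∧ x j ≠ z}
  have hLN (i : Fin k) : LN i ↔ IsGreatest S i := by
    rw [isGreatest_setOf_iff]
    simp only [LN, Fin.lt_def, not_and_not_right, and_assoc, imp_iff_not_or]
  by_cases hlast : x last = z
  · have hA : A ↔ ∃ i, IsGreatest S i ∧ (x i : ℕ) % 2 = 1 := by simp only [A, hLN]
    have hE : (∃ i, LN i ∧ (x i : ℕ) % 2 = 0) ↔ ∃ i, IsGreatest S i ∧ ¬ (x i : ℕ) % 2 = 1 := by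
      simp only [hLN, Nat.mod_two_ne_one]
    have hxor : Xor (Xor C₁ C₂) C₃ ↔ (A ↔ ∃ i, LN i ∧ (x i : ℕ) % 2 = 0) := by
      have hzo : z ≠ o := by simp [z, o, Fin.ext_iff]
      simp only [C₁, C₂, C₃, hlast, hzo, true_and, false_and, or_false, xor_true]
      rw [xor_iff_not_iff', not_not]
    have hsplit (i : Fin k) : (i : ℕ) < k - 1 ∨ i = last := by
      rw [Fin.ext_iff]; have := i.isLt; simp only [last]; omega
    rw [hxor, hA, hE, exists_isGreatest_and_iff_and_not_iff, exists_isGreatest_iff_nonempty]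
    constructor
    · intro hS i
      rcases hsplit i with hi | rfl
      · by_contra h; exact hS ⟨i, hi, h⟩
      · exact hlast
    · exact fun hall ⟨i, _, hi⟩ => hi (hall i)
  · have hC₂₃ : C₂ ↔ C₃ := by simp only [C₂, C₃, hlast, false_and, false_or]
    have hxor : ¬ Xor (Xor C₁ C₂) C₃ := by
      simp only [C₁, hlast, hC₂₃, xor_false, id, _root_.xor_self, not_false_eq_true]
    exact iff_of_false hxor fun hall => hlast (hall last)
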